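/- No many-fit-one stationary configuration of the entropic OT loss: let θ* ∈ ℝ^K have distinct entries, let 1 ≤ k₁ ≤ K-1, let G₁ ⊆ {1,…,K} be the set of indices of the k₁ smallest entries of θ*, and let Δ := min{|θ*_{g₁} - θ*_{g₂}| : g₁ ∈ G₁, g₂ ∉ G₁} > 0 be the gap between the two groups. Suppose θ ∈ ℝ^K and I ⊆ {1,…,K} with |I| > k₁ are such that there is a surjection τ : I → G₁ with |θ_k - θ*_{τ(k)}| ≤ δ for all k ∈ I. Fix γ with 0 < γ < 1 - k₁/|I| and suppose the separation condition Δ ≥ Kσ / (√(2π) ((1-γ)|I| - k₁)) holds and δ < γΔ. Then there is no weight vector a ∈ (0,1)^K with Σ_k a_k = 1 satisfying simultaneously, for every k, the marginal conditions ∫ Ψ_k(y,θ,a) dQ*(y) = 1/K and the first-order conditions ∫ (y - θ_k) Ψ_k(y,θ,a) dQ*(y) = 0. -/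

import Mathlib

/-!
Let `S = ∑_{k ∈ I} Ψ_k` and let `t_j = ∫ S dN(θ*_j, σ²)` be the mass that the `j`-th component
of `Q*` sends to the fitted centers in `I`. The marginal conditions give `0 ≤ t_j ≤ 1` and
`∑_j t_j = |I|`; together with the first-order conditions they give
`∑_{k ∈ I} θ_k = ∑_j ∫ y S dN(θ*_j, σ²) ≥ ∑_j θ*_j t_j - Kσ/√(2π)`, because weighting a Gaussian
by `S ∈ [0, 1]` lowers its first moment by at most the mean `σ/√(2π)` of its left tail.
At most `k₁` units of mass can come from `G₁`, so at least `|I| - k₁` units come from centers lying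
`Δ` above `G₁`, whereas `θ` stays within `δ < γΔ` of `G₁` on `I`. Comparing the two bounds gives
`((1 - γ)|I| - k₁)Δ < Kσ/√(2π)`, against the separation condition.
-/

open MeasureTheory

noncomputable def gauss1 (σ μ y : ℝ) : ℝ :=
  (Real.sqrt (2 * Real.pi * σ ^ 2))⁻¹ * Real.exp (-(y - μ) ^ 2 / (2 * σ ^ 2))

/-- The equal-weight Gaussian mixture measure `Q*` on `ℝ` with centers `θ*`. -/
noncomputable def mixQ (K : ℕ) (σ : ℝ) (θstar : Fin K → ℝ) : Measure ℝ :=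
  volume.withDensity fun y => ENNReal.ofReal ((1 / K : ℝ) * ∑ k, gauss1 σ (θstar k) y)

/-- The responsibilities `Ψ_k(y, θ, a)`. -/
noncomputable def resp (K : ℕ) (σ : ℝ) (θ : Fin K → ℝ) (a : Fin K → ℝ)
    (k : Fin K) (y : ℝ) : ℝ :=
  a k * Real.exp (-(y - θ k) ^ 2 / (2 * σ ^ 2)) /
    ∑ j, a j * Real.exp (-(y - θ j) ^ 2 / (2 * σ ^ 2))

open Real Set ProbabilityTheory
open scoped NNReal ENNReal

lemma integral_Ioi_mul_exp_neg_mul_sq {b : ℝ} (hb : 0 < b) :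
    ∫ x in Ioi (0 : ℝ), x * exp (-b * x ^ 2) = (2 * b)⁻¹ := by
  have h := integral_rpow_mul_exp_neg_mul_rpow (p := 2) (q := 1) two_pos (by norm_num) hb
  norm_num at h
  simp only [neg_mul]
  rw [h, rpow_neg_one]
  ring

lemma integral_max_const_sub_gaussianReal (μ : ℝ) {v : ℝ≥0} (hv : v ≠ 0) :
    ∫ y, max (μ - y) 0 ∂gaussianReal μ v = √v / √(2 * π) := by
  have hmap : (gaussianReal 0 v).map (μ - ·) = gaussianReal μ v := by
    simpa using gaussianReal_map_const_sub (μ := 0) (v := v) μ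
  have hv' : (0 : ℝ) < v := by positivity
  rw [← hmap, integral_map (by fun_prop) (by fun_prop), integral_gaussianReal_eq_integral_smul hv]
  simp only [sub_sub_cancel, smul_eq_mul]
  rw [← setIntegral_eq_integral_of_forall_compl_eq_zero (s := Ioi 0) fun x (hx : ¬ 0 < x) => by
    simp [max_eq_right (not_lt.mp hx)]]
  calc ∫ x in Ioi 0, gaussianPDFReal 0 v x * max x 0
      = (√(2 * π * v))⁻¹ * ∫ x in Ioi 0, x * exp (-(2 * (v : ℝ))⁻¹ * x ^ 2) := by
        rw [← integral_const_mul]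
        refine setIntegral_congr_fun measurableSet_Ioi fun x (hx : 0 < x) => ?_
        rw [gaussianPDFReal, max_eq_left hx.le, sub_zero]
        field_simp
    _ = √v / √(2 * π) := by
        rw [integral_Ioi_mul_exp_neg_mul_sq (by positivity), sqrt_mul' _ hv'.le]
        field_simp
        rw [sq_sqrt hv'.le]

lemma integrable_of_mem_Icc {ν : Measure ℝ} [IsFiniteMeasure ν] {S : ℝ → ℝ} (hS : Measurable S)
    (hS01 : ∀ y, S y ∈ Icc (0 : ℝ) 1) : Integrable S ν :=
  .of_bound hS.aestronglyMeasurable 1 <|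
    ae_of_all _ fun y => abs_le.2 ⟨by linarith [(hS01 y).1], (hS01 y).2⟩

lemma integrable_id_mul_gaussianReal (μ : ℝ) (v : ℝ≥0) {S : ℝ → ℝ} (hS : Measurable S)
    (hS01 : ∀ y, S y ∈ Icc (0 : ℝ) 1) : Integrable (fun y => y * S y) (gaussianReal μ v) :=
  ((memLp_id_gaussianReal 1).integrable le_rfl).mul_bdd hS.aestronglyMeasurable <|
    ae_of_all _ fun y => abs_le.2 ⟨by linarith [(hS01 y).1], (hS01 y).2⟩

lemma le_integral_id_mul_gaussianReal (μ : ℝ) {v : ℝ≥0} (hv : v ≠ 0) {S : ℝ → ℝ}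
    (hS : Measurable S) (hS01 : ∀ y, S y ∈ Icc (0 : ℝ) 1) :
    μ * ∫ y, S y ∂gaussianReal μ v - √v / √(2 * π) ≤ ∫ y, y * S y ∂gaussianReal μ v := by
  have hSint : Integrable S (gaussianReal μ v) := integrable_of_mem_Icc hS hS01
  have hyS := integrable_id_mul_gaussianReal μ v hS hS01
  have htail : Integrable (fun y => max (μ - y) 0) (gaussianReal μ v) :=
    ((integrable_const μ).sub ((memLp_id_gaussianReal 1).integrable le_rfl)).pos_part
  have key : ∫ y, -max (μ - y) 0 ∂gaussianReal μ v
      ≤ ∫ y, (y * S y - μ * S y) ∂gaussianReal μ v := by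
    refine integral_mono htail.neg (hyS.sub (hSint.const_mul μ)) fun y => ?_
    obtain ⟨h0, h1⟩ := hS01 y
    rcases le_total μ y with h | h
    · simp only [max_eq_right (sub_nonpos.mpr h)]; nlinarith
    · simp only [max_eq_left (sub_nonneg.mpr h)]; nlinarith
  rw [integral_neg, integral_max_const_sub_gaussianReal μ hv,
    integral_sub hyS (hSint.const_mul μ), integral_const_mul] at key
  linarith

section mixture

variable {K : ℕ} {σ : ℝ} {θstar : Fin K → ℝ}

lemma gauss1_eq_gaussianPDFReal (σ μ : ℝ) : gauss1 σ μ = gaussianPDFReal μ (σ ^ 2).toNNReal := by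
  ext y
  rw [gauss1, gaussianPDFReal, Real.coe_toNNReal _ (sq_nonneg σ)]

lemma mixQ_eq_smul_sum_gaussianReal (hσ : σ ≠ 0) :
    mixQ K σ θstar = ENNReal.ofReal (1 / K) • ∑ j, gaussianReal (θstar j) (σ ^ 2).toNNReal := by
  have hv : (σ ^ 2).toNNReal ≠ 0 := by simpa using hσ
  have hdens : ∀ y, ENNReal.ofReal (1 / K * ∑ j, gauss1 σ (θstar j) y)
      = ENNReal.ofReal (1 / K) * ∑ j, gaussianPDF (θstar j) (σ ^ 2).toNNReal y := fun y => by
    rw [ENNReal.ofReal_mul (by positivity), ENNReal.ofReal_sum_of_nonneg fun j _ =>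
      gauss1_eq_gaussianPDFReal σ _ ▸ gaussianPDFReal_nonneg _ _ _]
    simp [gaussianPDF, gauss1_eq_gaussianPDFReal]
  ext s hs
  rw [mixQ, withDensity_apply _ hs, lintegral_congr hdens, lintegral_const_mul _
      (Finset.measurable_sum _ fun j _ => measurable_gaussianPDF _ _),
    lintegral_finsetSum _ fun j _ => measurable_gaussianPDF _ _]
  simp [gaussianReal_apply _ hv]

lemma integrable_mixQ (hσ : σ ≠ 0) {f : ℝ → ℝ}
    (hf : ∀ j, Integrable f (gaussianReal (θstar j) (σ ^ 2).toNNReal)) :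
    Integrable f (mixQ K σ θstar) := by
  rw [mixQ_eq_smul_sum_gaussianReal hσ]
  exact (integrable_finsetSum_measure.2 fun j _ => hf j).smul_measure ENNReal.ofReal_ne_top

lemma integral_mixQ (hσ : σ ≠ 0) {f : ℝ → ℝ}
    (hf : ∀ j, Integrable f (gaussianReal (θstar j) (σ ^ 2).toNNReal)) :
    ∫ y, f y ∂mixQ K σ θstar = 1 / K * ∑ j, ∫ y, f y ∂gaussianReal (θstar j) (σ ^ 2).toNNReal := by
  rw [mixQ_eq_smul_sum_gaussianReal hσ, integral_smul_measure,
    integral_finsetSum_measure fun j _ => hf j, ENNReal.toReal_ofReal (by positivity),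
    smul_eq_mul]

end mixture

section stationary

variable {ι : Type*} {Q : Measure ℝ} {Ψ : ι → ℝ → ℝ} {I : Finset ι} {c : ℝ}

lemma integral_sum_eq_card_mul (hint : ∀ k ∈ I, Integrable (Ψ k) Q)
    (hmarg : ∀ k ∈ I, ∫ y, Ψ k y ∂Q = c) :
    ∫ y, ∑ k ∈ I, Ψ k y ∂Q = I.card * c := by
  rw [integral_finsetSum _ hint, Finset.sum_congr rfl hmarg, Finset.sum_const, nsmul_eq_mul]

lemma integral_id_mul_sum_eq_mul_sum (θ : ι → ℝ) (hint : ∀ k ∈ I, Integrable (Ψ k) Q)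
    (hint' : ∀ k ∈ I, Integrable (fun y => y * Ψ k y) Q)
    (hmarg : ∀ k ∈ I, ∫ y, Ψ k y ∂Q = c)
    (hfoc : ∀ k ∈ I, ∫ y, (y - θ k) * Ψ k y ∂Q = 0) :
    ∫ y, y * ∑ k ∈ I, Ψ k y ∂Q = c * ∑ k ∈ I, θ k := by
  have hmean : ∀ k ∈ I, ∫ y, y * Ψ k y ∂Q = c * θ k := fun k hk => by
    have h := hfoc k hk
    simp_rw [sub_mul] at h
    rw [integral_sub (hint' k hk) ((hint k hk).const_mul (θ k)), integral_const_mul,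
      hmarg k hk] at h
    linarith
  simp_rw [Finset.mul_sum]
  rw [integral_finsetSum _ hint', Finset.sum_congr rfl hmean]

end stationary

lemma exists_masses_of_stationary {K : ℕ} (hK : K ≠ 0) {σ : ℝ} (hσ : 0 < σ)
    {θstar : Fin K → ℝ} {ι : Type*} {Ψ : ι → ℝ → ℝ} (θ : ι → ℝ) (I : Finset ι)
    (hΨ : ∀ k, Measurable (Ψ k)) (hΨ0 : ∀ k y, 0 ≤ Ψ k y) (hΨ1 : ∀ y, ∑ k ∈ I, Ψ k y ≤ 1)
    (hmarg : ∀ k ∈ I, ∫ y, Ψ k y ∂mixQ K σ θstar = 1 / K)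
    (hfoc : ∀ k ∈ I, ∫ y, (y - θ k) * Ψ k y ∂mixQ K σ θstar = 0) :
    ∃ t : Fin K → ℝ, (∀ j, t j ∈ Icc (0 : ℝ) 1) ∧ ∑ j, t j = I.card ∧
      ∑ j, θstar j * t j - K * (σ / √(2 * π)) ≤ ∑ k ∈ I, θ k := by
  have hv : (σ ^ 2).toNNReal ≠ 0 := by simpa using hσ.ne'
  have hΨ01 : ∀ k ∈ I, ∀ y, Ψ k y ∈ Icc (0 : ℝ) 1 := fun k hk y =>
    ⟨hΨ0 k y, (Finset.single_le_sum (fun k _ => hΨ0 k y) hk).trans (hΨ1 y)⟩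
  have hS : Measurable fun y => ∑ k ∈ I, Ψ k y := Finset.measurable_sum _ fun k _ => hΨ k
  have hS01 : ∀ y, ∑ k ∈ I, Ψ k y ∈ Icc (0 : ℝ) 1 := fun y =>
    ⟨Finset.sum_nonneg fun k _ => hΨ0 k y, hΨ1 y⟩
  have hint : ∀ k ∈ I, Integrable (Ψ k) (mixQ K σ θstar) := fun k hk =>
    integrable_mixQ hσ.ne' fun j => integrable_of_mem_Icc (hΨ k) (hΨ01 k hk)
  have hint' : ∀ k ∈ I, Integrable (fun y => y * Ψ k y) (mixQ K σ θstar) := fun k hk =>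
    integrable_mixQ hσ.ne' fun j => integrable_id_mul_gaussianReal _ _ (hΨ k) (hΨ01 k hk)
  have hmass := integral_sum_eq_card_mul hint hmarg
  have hmean := integral_id_mul_sum_eq_mul_sum θ hint hint' hmarg hfoc
  rw [integral_mixQ hσ.ne' fun j => integrable_of_mem_Icc hS hS01] at hmass
  rw [integral_mixQ hσ.ne' fun j => integrable_id_mul_gaussianReal _ _ hS hS01] at hmean
  refine ⟨fun j => ∫ y, ∑ k ∈ I, Ψ k y ∂gaussianReal (θstar j) (σ ^ 2).toNNReal,
    fun j => ⟨integral_nonneg fun y => (hS01 y).1, ?_⟩, ?_, ?_⟩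
  · exact (integral_mono (integrable_of_mem_Icc hS hS01) (integrable_const 1)
      fun y => (hS01 y).2).trans_eq (by simp)
  · field_simp at hmass
    linarith
  · have hsum := Finset.sum_le_sum fun j (_ : j ∈ Finset.univ) =>
      le_integral_id_mul_gaussianReal (θstar j) hv hS hS01
    rw [Finset.sum_sub_distrib, Finset.sum_const, Finset.card_univ, Fintype.card_fin,
      nsmul_eq_mul, Real.coe_toNNReal _ (sq_nonneg σ), Real.sqrt_sq hσ.le] at hsum
    field_simp at hmean
    linarith

section responsibilities

variable {K : ℕ} {σ : ℝ} {θ a : Fin K → ℝ}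

lemma resp_nonneg (ha : ∀ j, 0 ≤ a j) (k : Fin K) (y : ℝ) : 0 ≤ resp K σ θ a k y :=
  div_nonneg (mul_nonneg (ha k) (exp_pos _).le)
    (Finset.sum_nonneg fun j _ => mul_nonneg (ha j) (exp_pos _).le)

lemma sum_resp_le_one (ha : ∀ j, 0 ≤ a j) (I : Finset (Fin K)) (y : ℝ) :
    ∑ k ∈ I, resp K σ θ a k y ≤ 1 := by
  simp only [resp]
  rw [← Finset.sum_div]
  exact div_le_one_of_le₀ (Finset.sum_le_sum_of_subset_of_nonneg (Finset.subset_univ I)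
      fun j _ _ => mul_nonneg (ha j) (exp_pos _).le)
    (Finset.sum_nonneg fun j _ => mul_nonneg (ha j) (exp_pos _).le)

lemma measurable_resp (k : Fin K) : Measurable (resp K σ θ a k) := by
  unfold resp
  fun_prop

end responsibilities

lemma sum_comp_le_sum_add_card_sub_mul {ι κ : Type*} [DecidableEq κ] {I : Finset ι}
    {G : Finset κ} {τ : ι → κ} (hτ : Set.MapsTo τ I G) (hτ' : Set.SurjOn τ I G) {f : κ → ℝ}
    {m : ℝ} (hf : ∀ g ∈ G, f g ≤ m) :
    ∑ k ∈ I, f (τ k) ≤ ∑ g ∈ G, f g + (I.card - G.card) * m := by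
  have h : ∑ g ∈ G, (m - f g) ≤ ∑ k ∈ I, (m - f (τ k)) := by
    rw [← Finset.sum_fiberwise_of_maps_to hτ]
    refine Finset.sum_le_sum fun g hg => ?_
    obtain ⟨k, hk, rfl⟩ := hτ' hg
    exact Finset.single_le_sum (f := fun k => m - f (τ k))
      (fun k' hk' => sub_nonneg.2 (hf _ (hτ (Finset.mem_filter.1 hk').1)))
      (Finset.mem_filter.2 ⟨hk, rfl⟩)
  simp only [Finset.sum_sub_distrib, Finset.sum_const, nsmul_eq_mul] at h
  linarith

lemma sum_add_sub_card_mul_le_sum_mul {ι : Type*} [Fintype ι] {G : Finset ι} {x t : ι → ℝ}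
    {c : ℝ} (hG : ∀ g ∈ G, x g ≤ c) (hGc : ∀ j ∉ G, c ≤ x j) (ht : ∀ j, t j ∈ Icc (0 : ℝ) 1) :
    ∑ g ∈ G, x g + (∑ j, t j - G.card) * c ≤ ∑ j, x j * t j := by
  have h : ∑ g ∈ G, (x g - c) ≤ ∑ j, (x j - c) * t j :=
    calc ∑ g ∈ G, (x g - c) ≤ ∑ g ∈ G, (x g - c) * t g :=
          Finset.sum_le_sum fun g hg => by nlinarith [hG g hg, (ht g).2]
      _ ≤ ∑ j, (x j - c) * t j :=
          Finset.sum_le_sum_of_subset_of_nonneg (Finset.subset_univ G) fun j _ hj =>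
            mul_nonneg (sub_nonneg.2 (hGc j hj)) (ht j).1
  simp only [sub_mul, Finset.sum_sub_distrib, Finset.sum_const, nsmul_eq_mul] at h
  rw [← Finset.mul_sum] at h
  linarith

lemma exists_threshold_of_gap {ι : Type*} {G : Finset ι} (hG : G.Nonempty) {x : ι → ℝ} {Δ : ℝ}
    (hlt : ∀ i ∈ G, ∀ j ∉ G, x i < x j) (hgap : ∀ i ∈ G, ∀ j ∉ G, Δ ≤ |x i - x j|) :
    ∃ m, (∀ i ∈ G, x i ≤ m) ∧ ∀ j ∉ G, m + Δ ≤ x j := by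
  obtain ⟨i, hi, hm⟩ := G.exists_mem_eq_sup' hG x
  refine ⟨G.sup' hG x, fun i hi => G.le_sup' x hi, fun j hj => ?_⟩
  have h := hgap i hi j hj
  rw [abs_of_neg (sub_neg.2 (hlt i hi j hj))] at h
  linarith

theorem no_many_fit_one_stationary_point_general
    (K : ℕ) (σ : ℝ) (hσ : 0 < σ)
    (θstar : Fin K → ℝ)
    (k₁ : ℕ)
    (G₁ : Finset (Fin K)) (hG₁card : G₁.card = k₁)
    (hG₁small : ∀ i ∈ G₁, ∀ j ∉ G₁, θstar i < θstar j)
    (Δ : ℝ)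
    (hΔgap : ∀ g₁ ∈ G₁, ∀ g₂ ∉ G₁, Δ ≤ |θstar g₁ - θstar g₂|)
    (θ : Fin K → ℝ) (δ : ℝ)
    (I : Finset (Fin K)) (hIcard : k₁ < I.card)
    (τ : Fin K → Fin K)
    (hτmem : ∀ k ∈ I, τ k ∈ G₁)
    (hτsurj : ∀ g ∈ G₁, ∃ k ∈ I, τ k = g)
    (hcover : ∀ k ∈ I, |θ k - θstar (τ k)| ≤ δ)
    (γ : ℝ) (hγ1 : γ < 1 - (k₁ : ℝ) / (I.card : ℝ))
    (hsep : Δ ≥ (K : ℝ) * σ /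
      (Real.sqrt (2 * Real.pi) * ((1 - γ) * (I.card : ℝ) - (k₁ : ℝ))))
    (hδ : δ < γ * Δ) :
    ¬ ∃ a : Fin K → ℝ, (∀ k, a k ∈ Set.Ioo (0 : ℝ) 1) ∧ (∑ k, a k = 1) ∧
      (∀ k, ∫ y, resp K σ θ a k y ∂(mixQ K σ θstar) = 1 / K) ∧
      (∀ k, ∫ y, (y - θ k) * resp K σ θ a k y ∂(mixQ K σ θstar) = 0) := by
  rintro ⟨a, ha, -, hmarg, hfoc⟩
  obtain ⟨k, hk⟩ := Finset.card_pos.1 (by omega : 0 < I.card)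
  have ha0 : ∀ j, 0 ≤ a j := fun j => (ha j).1.le
  obtain ⟨t, ht, htsum, hmean⟩ := exists_masses_of_stationary k.pos.ne' hσ θ I measurable_resp
    (resp_nonneg ha0) (sum_resp_le_one ha0 I) (fun k _ => hmarg k) (fun k _ => hfoc k)
  obtain ⟨m, hm, hgap⟩ := exists_threshold_of_gap ⟨τ k, hτmem k hk⟩ hG₁small hΔgap
  have hI : (0 : ℝ) < I.card := Nat.cast_pos.2 (Finset.card_pos.2 ⟨k, hk⟩)
  have hc : 0 < (1 - γ) * I.card - k₁ := by
    have h := mul_lt_mul_of_pos_right hγ1 hI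
    rw [sub_mul, div_mul_cancel₀ _ (by positivity)] at h
    linarith
  have hΔ : 0 < Δ := lt_of_lt_of_le (div_pos (mul_pos (Nat.cast_pos.2 k.pos) hσ)
    (mul_pos (sqrt_pos.2 (by positivity)) hc)) hsep
  have hsum_τ := sum_comp_le_sum_add_card_sub_mul hτmem hτsurj hm
  have hsum_t := sum_add_sub_card_mul_le_sum_mul (c := m + Δ)
    (fun g hg => by linarith [hm g hg]) hgap ht
  have hsum_θ : ∑ k ∈ I, θ k ≤ ∑ k ∈ I, θstar (τ k) + I.card * δ := by
    rw [← nsmul_eq_mul, ← Finset.sum_const, ← Finset.sum_add_distrib]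
    exact Finset.sum_le_sum fun k hk => by linarith [(abs_le.1 (hcover k hk)).2]
  rw [htsum, hG₁card] at hsum_t
  rw [hG₁card] at hsum_τ
  have hsep' : K * (σ / √(2 * π)) ≤ ((1 - γ) * I.card - k₁) * Δ := by
    rw [ge_iff_le, div_le_iff₀ (by positivity)] at hsep
    rw [mul_div_assoc', div_le_iff₀ (by positivity)]
    linarith
  have hδ' := mul_lt_mul_of_pos_left hδ hI
  linarith

/-- no many-fit-one stationary configuration of the entropic OT loss.
If a group `G₁` of `k₁` true centers is `δ`-covered by a strictly larger set `I` of
fitted centers, the separation condition holds, and `δ < γΔ`, then no tilted weight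
vector `a` can satisfy simultaneously the marginal conditions and the first-order
conditions — i.e. `θ` is not a stationary point of `𝓛`. -/
theorem no_many_fit_one_stationary_point
    (K : ℕ) (hK : 2 ≤ K) (σ : ℝ) (hσ : 0 < σ)
    (θstar : Fin K → ℝ) (hinj : Function.Injective θstar)
    (k₁ : ℕ) (hk₁ : 1 ≤ k₁) (hk₁K : k₁ ≤ K - 1)
    (G₁ : Finset (Fin K)) (hG₁card : G₁.card = k₁)
    (hG₁small : ∀ i ∈ G₁, ∀ j ∉ G₁, θstar i < θstar j)
    (Δ : ℝ) (hΔpos : 0 < Δ)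
    (hΔgap : ∀ g₁ ∈ G₁, ∀ g₂ ∉ G₁, Δ ≤ |θstar g₁ - θstar g₂|)
    (θ : Fin K → ℝ) (δ : ℝ)
    (I : Finset (Fin K)) (hIcard : k₁ < I.card)
    (τ : Fin K → Fin K)
    (hτmem : ∀ k ∈ I, τ k ∈ G₁)
    (hτsurj : ∀ g ∈ G₁, ∃ k ∈ I, τ k = g)
    (hcover : ∀ k ∈ I, |θ k - θstar (τ k)| ≤ δ)
    (γ : ℝ) (hγ0 : 0 < γ) (hγ1 : γ < 1 - (k₁ : ℝ) / (I.card : ℝ))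
    (hsep : Δ ≥ (K : ℝ) * σ /
      (Real.sqrt (2 * Real.pi) * ((1 - γ) * (I.card : ℝ) - (k₁ : ℝ))))
    (hδ : δ < γ * Δ) :
    ¬ ∃ a : Fin K → ℝ, (∀ k, a k ∈ Set.Ioo (0 : ℝ) 1) ∧ (∑ k, a k = 1) ∧
      (∀ k, ∫ y, resp K σ θ a k y ∂(mixQ K σ θstar) = 1 / K) ∧
      (∀ k, ∫ y, (y - θ k) * resp K σ θ a k y ∂(mixQ K σ θstar) = 0) :=
  no_many_fit_one_stationary_point_general K σ hσ θstar k₁ G₁ hG₁card hG₁small Δ hΔgap θ δ I hIcard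
    τ hτmem hτsurj hcover γ hγ1 hsep hδ
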